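/- Let Q be a supported quantale with support ς, let K be a stably supported quantale with support ς', and let h : Q → K be a homomorphism of unital involutive quantales, i.e. h preserves arbitrary suprema, h(a b) = h(a) h(b), h(e) = e, and h(a*) = h(a)*. Then h(ς a) = ς'(h a) for all a ∈ Q. -/

import Mathlib

/-!
Since `h` preserves joins it is monotone, so applying it to `ς a ≤ e`, `ς a ≤ a a*` and
`a ≤ (ς a) a` shows that `b := h (ς a)` satisfies `b ≤ e`, `b ≤ (h a) (h a)*` and
`h a ≤ b (h a)`. In a stably supported quantale these three inequalities characterise
`ς' (h a)`: a support fixes every element below the unit, and stability gives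
`ς' x ≤ ς' y` whenever `x ≤ y z`.
-/

theorem monotone_of_map_sSup {α β : Type*} [CompleteLattice α] [CompleteLattice β]
    {f : α → β} (hf : ∀ T : Set α, f (sSup T) = sSup (f '' T)) : Monotone f :=
  OrderHomClass.mono (sSupHom.mk f hf)

theorem star_unit_eq_unit {M : Type*} {m : M → M → M} {e : M} {st : M → M}
    (hel : ∀ a, m e a = a) (hstst : ∀ a, st (st a) = a)
    (hstm : ∀ a b, st (m a b) = m (st b) (st a)) : st e = e := by
  have h := hstm e (st e)
  rwa [hel, hstst, hel, eq_comm] at h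

section SupportedQuantale

variable {K : Type*} [PartialOrder K] {m : K → K → K} {e : K} {st sp : K → K}

theorem support_eq_self_of_le_unit (hmono : ∀ a, Monotone (m a)) (hst : Monotone st)
    (her : ∀ a, m a e = a) (hste : st e = e)
    (hsp2 : ∀ a, sp a ≤ m a (st a)) (hsp3 : ∀ a, a ≤ m (sp a) a)
    {b : K} (hb : b ≤ e) : sp b = b :=
  le_antisymm
    (calc sp b ≤ m b (st b) := hsp2 b
      _ ≤ m b e := hmono b (hste ▸ hst hb)
      _ = b := her b)
    (calc b ≤ m (sp b) b := hsp3 b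
      _ ≤ m (sp b) e := hmono _ hb
      _ = sp b := her _)

theorem support_le_of_le_mul (hsp : Monotone sp) (hstable : ∀ a b, sp (m a b) ≤ sp a)
    {x y z : K} (hxyz : x ≤ m y z) : sp x ≤ sp y :=
  (hsp hxyz).trans (hstable y z)

theorem support_eq_of_le_unit (hmono : ∀ a, Monotone (m a)) (hst : Monotone st)
    (her : ∀ a, m a e = a) (hste : st e = e)
    (hsp : Monotone sp) (hsp2 : ∀ a, sp a ≤ m a (st a)) (hsp3 : ∀ a, a ≤ m (sp a) a)
    (hstable : ∀ a b, sp (m a b) ≤ sp a)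
    {a b : K} (hbe : b ≤ e) (hba : b ≤ m a (st a)) (hab : a ≤ m b a) : sp a = b := by
  have hfix : sp b = b := support_eq_self_of_le_unit hmono hst her hste hsp2 hsp3 hbe
  apply le_antisymm
  · rw [← hfix]
    exact support_le_of_le_mul hsp hstable hab
  · calc b = sp b := hfix.symm
      _ ≤ sp a := support_le_of_le_mul hsp hstable hba

end SupportedQuantale

theorem stmt_6_general {Q : Type*} [CompleteLattice Q] {K : Type*} [CompleteLattice K]
    -- supported quantale Q
    (m : Q → Q → Q) (e : Q) (st : Q → Q) (sp : Q → Q)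
    (hsp1 : ∀ a : Q, sp a ≤ e)
    (hsp2 : ∀ a : Q, sp a ≤ m a (st a))
    (hsp3 : ∀ a : Q, a ≤ m (sp a) a)
    -- stably supported quantale K
    (m' : K → K → K) (e' : K) (st' : K → K) (sp' : K → K)
    (hdistl' : ∀ (a : K) (T : Set K), m' a (sSup T) = sSup ((fun b => m' a b) '' T))
    (hel' : ∀ a : K, m' e' a = a) (her' : ∀ a : K, m' a e' = a)
    (hstsup' : ∀ T : Set K, st' (sSup T) = sSup (st' '' T))
    (hstst' : ∀ a : K, st' (st' a) = a)
    (hstm' : ∀ a b : K, st' (m' a b) = m' (st' b) (st' a))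
    (hspsup' : ∀ T : Set K, sp' (sSup T) = sSup (sp' '' T))
    (hsp2' : ∀ a : K, sp' a ≤ m' a (st' a))
    (hsp3' : ∀ a : K, a ≤ m' (sp' a) a)
    (hstable' : ∀ a b : K, sp' (m' a b) ≤ sp' a)
    -- homomorphism of unital involutive quantales
    (h : Q → K)
    (hhsup : ∀ T : Set Q, h (sSup T) = sSup (h '' T))
    (hhm : ∀ a b : Q, h (m a b) = m' (h a) (h b))
    (hhe : h e = e')
    (hhst : ∀ a : Q, h (st a) = st' (h a)) :
    ∀ a : Q, h (sp a) = sp' (h a) := by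
  intro a
  have hh : Monotone h := monotone_of_map_sSup hhsup
  refine (support_eq_of_le_unit (fun x => monotone_of_map_sSup (hdistl' x))
    (monotone_of_map_sSup hstsup') her' (star_unit_eq_unit hel' hstst' hstm')
    (monotone_of_map_sSup hspsup') hsp2' hsp3' hstable' ?_ ?_ ?_).symm
  · exact hhe ▸ hh (hsp1 a)
  · simpa only [hhm, hhst] using hh (hsp2 a)
  · simpa only [hhm] using hh (hsp3 a)

/-- A homomorphism of unital involutive quantales from a supported quantale
to a stably supported quantale preserves the support (Theorem `thm:fullsubcat`-2). -/
theorem stmt_6 {Q : Type*} [CompleteLattice Q] {K : Type*} [CompleteLattice K]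
    -- supported quantale Q
    (m : Q → Q → Q) (e : Q) (st : Q → Q) (sp : Q → Q)
    (hassoc : ∀ a b c : Q, m (m a b) c = m a (m b c))
    (hdistl : ∀ (a : Q) (T : Set Q), m a (sSup T) = sSup ((fun b => m a b) '' T))
    (hdistr : ∀ (b : Q) (T : Set Q), m (sSup T) b = sSup ((fun a => m a b) '' T))
    (hel : ∀ a : Q, m e a = a) (her : ∀ a : Q, m a e = a)
    (hstsup : ∀ T : Set Q, st (sSup T) = sSup (st '' T))
    (hstst : ∀ a : Q, st (st a) = a)
    (hstm : ∀ a b : Q, st (m a b) = m (st b) (st a))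
    (hspsup : ∀ T : Set Q, sp (sSup T) = sSup (sp '' T))
    (hsp1 : ∀ a : Q, sp a ≤ e)
    (hsp2 : ∀ a : Q, sp a ≤ m a (st a))
    (hsp3 : ∀ a : Q, a ≤ m (sp a) a)
    -- stably supported quantale K
    (m' : K → K → K) (e' : K) (st' : K → K) (sp' : K → K)
    (hassoc' : ∀ a b c : K, m' (m' a b) c = m' a (m' b c))
    (hdistl' : ∀ (a : K) (T : Set K), m' a (sSup T) = sSup ((fun b => m' a b) '' T))
    (hdistr' : ∀ (b : K) (T : Set K), m' (sSup T) b = sSup ((fun a => m' a b) '' T))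
    (hel' : ∀ a : K, m' e' a = a) (her' : ∀ a : K, m' a e' = a)
    (hstsup' : ∀ T : Set K, st' (sSup T) = sSup (st' '' T))
    (hstst' : ∀ a : K, st' (st' a) = a)
    (hstm' : ∀ a b : K, st' (m' a b) = m' (st' b) (st' a))
    (hspsup' : ∀ T : Set K, sp' (sSup T) = sSup (sp' '' T))
    (hsp1' : ∀ a : K, sp' a ≤ e')
    (hsp2' : ∀ a : K, sp' a ≤ m' a (st' a))
    (hsp3' : ∀ a : K, a ≤ m' (sp' a) a)
    (hstable' : ∀ a b : K, sp' (m' a b) ≤ sp' a)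
    -- homomorphism of unital involutive quantales
    (h : Q → K)
    (hhsup : ∀ T : Set Q, h (sSup T) = sSup (h '' T))
    (hhm : ∀ a b : Q, h (m a b) = m' (h a) (h b))
    (hhe : h e = e')
    (hhst : ∀ a : Q, h (st a) = st' (h a)) :
    ∀ a : Q, h (sp a) = sp' (h a) :=
  stmt_6_general m e st sp hsp1 hsp2 hsp3 m' e' st' sp' hdistl' hel' her' hstsup' hstst' hstm'
    hspsup' hsp2' hsp3' hstable' h hhsup hhm hhe hhst
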